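/- arXiv:2405.09656 — 5 statements merged into one kernel-verified Lean document; each statement's English description precedes it below -/
import Mathlib

section
/- A connected simple graph G is distance critical if and only if every vertex v of G admits a determining pair, i.e., there exist two distinct nonadjacent vertices a and b whose unique common neighbor is v. -/
/-- A graph is *distance critical* if for every vertex `v` there is a pair of vertices of
`G − v` whose distance in `G − v` differs from their distance in `G`
(distances are `ℕ∞`-valued, `⊤` when there is no connecting path). -/
def IsDistanceCritical {V : Type*} (G : SimpleGraph V) : Prop :=
  ∀ v : V, ∃ x y : ({v}ᶜ : Set V),
    (G.induce ({v}ᶜ : Set V)).edist x y ≠ G.edist (x : V) (y : V)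

/-- `{a, b}` is a *determining pair* for `v` : `a` and `b` are distinct, nonadjacent,
and `v` is their unique common neighbor. -/
def IsDeterminingPair {V : Type*} (G : SimpleGraph V) (v a b : V) : Prop :=
  a ≠ b ∧ ¬ G.Adj a b ∧ G.Adj a v ∧ G.Adj b v ∧
    ∀ w : V, G.Adj a w → G.Adj b w → w = v

/-!
If `G − v` changes some distance, take a shortest path in `G` between two such vertices: it
must pass through `v`, and the neighbours `a`, `b` of `v` on it are at distance two. Any other
common neighbour `w` of `a` and `b` would give a walk of the same length avoiding `v`, so
`{a, b}` is a determining pair. Conversely, a determining pair for `v` is at distance two in `G`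
but has no common neighbour left in `G − v`.
-/

open SimpleGraph

namespace SimpleGraph

variable {V W : Type*} {G : SimpleGraph V}

theorem edist_map_le {G' : SimpleGraph W} (f : G →g G') (u v : V) :
    G'.edist (f u) (f v) ≤ G.edist u v := by
  by_cases hr : G.Reachable u v
  · obtain ⟨p, hp⟩ := hr.exists_walk_length_eq_edist
    rw [← hp, ← Walk.length_map f]
    exact edist_le _
  · rw [edist_eq_top_of_not_reachable hr]
    exact le_top

theorem edist_le_edist_induce {s : Set V} (u v : s) : G.edist u v ≤ (G.induce s).edist u v :=
  edist_map_le (Embedding.induce s).toHom u v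

theorem edist_induce_le_length {s : Set V} {u v : V} (p : G.Walk u v)
    (hp : ∀ w ∈ p.support, w ∈ s) :
    (G.induce s).edist ⟨u, hp _ p.start_mem_support⟩ ⟨v, hp _ p.end_mem_support⟩ ≤
      p.length := by
  have := edist_le (p.induce s hp)
  rwa [← Walk.length_map (Embedding.induce s).toHom, Walk.map_induce] at this

theorem Walk.IsPath.exists_eq_append_cons_cons [DecidableEq V] {u v w : V} {p : G.Walk u v}
    (hp : p.IsPath) (hw : w ∈ p.support) (huw : u ≠ w) (hvw : v ≠ w) :
    ∃ (a b : V) (q : G.Walk u a) (ha : G.Adj a w) (hb : G.Adj w b) (r : G.Walk b v),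
      p = q.append (.cons ha (.cons hb r)) ∧ w ∉ q.support ∧ w ∉ r.support := by
  obtain ⟨b, hb, r, hr⟩ := Walk.exists_eq_cons_of_ne hvw.symm (p.dropUntil w hw)
  obtain ⟨c, hc, q₀, hq₀⟩ := Walk.exists_eq_cons_of_ne huw (p.takeUntil w hw)
  obtain ⟨a, q, ha, hq⟩ := Walk.exists_cons_eq_concat hc q₀
  have hpath_take : (q.concat ha).IsPath := hq ▸ hq₀ ▸ hp.takeUntil hw
  have hpath_drop : (Walk.cons hb r).IsPath := hr ▸ hp.dropUntil hw
  refine ⟨a, b, q, ha, hb, r, ?_, ((Walk.concat_isPath_iff ha).1 hpath_take).2,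
    ((Walk.cons_isPath_iff hb r).1 hpath_drop).2⟩
  rw [← p.take_spec hw, hq₀, hq, hr, Walk.concat_append]

end SimpleGraph

theorem IsDeterminingPair.edist_eq_two {V : Type*} {G : SimpleGraph V} {v a b : V}
    (h : IsDeterminingPair G v a b) : G.edist a b = 2 :=
  edist_eq_two_iff.2 ⟨h.1, h.2.1, v, h.2.2.1, h.2.2.2.1⟩

theorem IsDeterminingPair.edist_induce_compl_ne_two {V : Type*} {G : SimpleGraph V} {v a b : V}
    (h : IsDeterminingPair G v a b) :
    (G.induce ({v}ᶜ : Set V)).edist ⟨a, h.2.2.1.ne⟩ ⟨b, h.2.2.2.1.ne⟩ ≠ 2 := by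
  rw [Ne, edist_eq_two_iff]
  rintro ⟨-, -, w, haw, hbw⟩
  exact w.2 (h.2.2.2.2 w haw hbw)

theorem exists_isDeterminingPair_of_edist_induce_compl_ne {V : Type*} {G : SimpleGraph V}
    {v : V} {x y : ({v}ᶜ : Set V)}
    (hxy : (G.induce ({v}ᶜ : Set V)).edist x y ≠ G.edist (x : V) (y : V)) :
    ∃ a b : V, IsDeterminingPair G v a b := by
  classical
  have hlt : G.edist (x : V) y < (G.induce ({v}ᶜ : Set V)).edist x y :=
    (edist_le_edist_induce x y).lt_of_ne hxy.symm
  have hreach : G.Reachable x y := reachable_of_edist_ne_top hlt.ne_top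
  obtain ⟨p, hp, hlen⟩ := hreach.exists_path_of_dist
  have hmin (W : G.Walk x y) : p.length ≤ W.length := hlen ▸ dist_le W
  have hlong (W : G.Walk x y) (hW : v ∉ W.support) : p.length < W.length := by
    have hW' : ∀ u ∈ W.support, u ∈ ({v}ᶜ : Set V) := fun u hu hv => hW (hv ▸ hu)
    have := hlt.trans_le (edist_induce_le_length W hW')
    rwa [← hreach.coe_dist_eq_edist, ← hlen, Nat.cast_lt] at this
  have hv : v ∈ p.support := by
    by_contra hv
    exact (hlong p hv).false
  obtain ⟨a, b, q, ha, hb, r, rfl, hvq, hvr⟩ := hp.exists_eq_append_cons_cons hv x.2 y.2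
  refine ⟨a, b, ?_, fun hab => ?_, ha, hb.symm, fun w haw hbw => ?_⟩
  · rintro rfl
    have := hmin (q.append r)
    simp only [Walk.length_append, Walk.length_cons] at this
    omega
  · have := hmin (q.append (.cons hab r))
    simp only [Walk.length_append, Walk.length_cons] at this
    omega
  · by_contra hwv
    have := hlong (q.append (.cons haw (.cons hbw.symm r)))
      (by simp [Walk.mem_support_append_iff, hvq, hvr, ha.ne', Ne.symm hwv])
    simp only [Walk.length_append, Walk.length_cons] at this
    omega

theorem stmt_0_general {V : Type*} (G : SimpleGraph V) :
    IsDistanceCritical G ↔ ∀ v : V, ∃ a b : V, IsDeterminingPair G v a b := by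
  refine ⟨fun h v => ?_, fun h v => ?_⟩
  · obtain ⟨x, y, hxy⟩ := h v
    exact exists_isDeterminingPair_of_edist_induce_compl_ne hxy
  · obtain ⟨a, b, hab⟩ := h v
    refine ⟨⟨a, hab.2.2.1.ne⟩, ⟨b, hab.2.2.2.1.ne⟩, ?_⟩
    rw [hab.edist_eq_two]
    exact hab.edist_induce_compl_ne_two

theorem stmt_0 {V : Type*} [Fintype V] (G : SimpleGraph V) (hconn : G.Connected) :
    IsDistanceCritical G ↔ ∀ v : V, ∃ a b : V, IsDeterminingPair G v a b :=
  stmt_0_general G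
end

section
/- In a 2-connected distance critical simple graph, every vertex is contained in a cycle of length at least 5. -/
namespace SimpleGraph

variable {V : Type*} {G : SimpleGraph V} {s : Set V} {u v w : V}

lemma Walk.dist_add_dist_le_length (p : G.Walk u v) (hw : w ∈ p.support) :
    G.dist u w + G.dist w v ≤ p.length := by
  classical
  exact calc G.dist u w + G.dist w v
      ≤ (p.takeUntil w hw).length + (p.dropUntil w hw).length :=
        add_le_add (dist_le _) (dist_le _)
    _ = p.length := by rw [← Walk.length_append, Walk.take_spec]

lemma Walk.two_le_length_of_mem_support (p : G.Walk u v) (hw : w ∈ p.support)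
    (hwu : w ≠ u) (hwv : w ≠ v) : 2 ≤ p.length := by
  rcases p with _ | ⟨_, _ | ⟨_, p⟩⟩ <;> simp_all

lemma Walk.IsPath.isCycle_append_reverse {p q : G.Walk u v} (hp : p.IsPath) (hq : q.IsPath)
    (hpq : ∀ x ∈ p.support, x ∈ q.support → x = u ∨ x = v) (hp₁ : 1 < p.length) :
    (p.append q.reverse).IsCycle := by
  refine hp.isCycle_append hq.reverse (fun x hxp hxq ↦ ?_) (Or.inl hp₁)
  have hp' := p.cons_tail_support ▸ hp.support_nodup
  have hq' := q.reverse.cons_tail_support ▸ hq.reverse.support_nodup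
  rcases hpq x (List.mem_of_mem_tail hxp)
    (by simpa using List.mem_of_mem_tail hxq) with rfl | rfl
  · exact (List.nodup_cons.1 hp').1 hxp
  · exact (List.nodup_cons.1 hq').1 hxq

lemma Walk.induce_dist_le_length {a b : s} (p : G.Walk a b) (hp : ∀ x ∈ p.support, x ∈ s) :
    (G.induce s).dist a b ≤ p.length :=
  calc (G.induce s).dist a b ≤ (p.induce s hp).length := dist_le _
    _ = p.length := (Walk.length_map _ _).symm.trans (congrArg Walk.length (p.map_induce hp))

lemma Reachable.of_induce {a b : s} (h : (G.induce s).Reachable a b) : G.Reachable a b :=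
  h.map (Embedding.induce s).toHom

lemma Reachable.dist_le_induce_dist {a b : s} (h : (G.induce s).Reachable a b) :
    G.dist a b ≤ (G.induce s).dist a b := by
  obtain ⟨p, hp⟩ := h.exists_walk_length_eq_dist
  calc G.dist a b ≤ (p.map (Embedding.induce s).toHom).length := dist_le _
    _ = (G.induce s).dist a b := by rw [Walk.length_map, hp]

lemma Connected.exists_minimal_dist_lt_induce_dist (hH : (G.induce s).Connected)
    (h : ∃ a b : s, (G.induce s).edist a b ≠ G.edist a b) :
    ∃ a b : s, G.dist a b < (G.induce s).dist a b ∧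
      ∀ x y : s, (G.induce s).dist x y < (G.induce s).dist a b →
        (G.induce s).dist x y = G.dist x y := by
  classical
  have hdist_ne (x y : s) : (G.induce s).edist x y ≠ G.edist x y ↔
      (G.induce s).dist x y ≠ G.dist x y := by
    rw [← (hH.preconnected x y).coe_dist_eq_edist,
      ← (hH.preconnected x y).of_induce.coe_dist_eq_edist, Ne, Ne, Nat.cast_inj]
  have hex : ∃ n, ∃ a b : s, (G.induce s).dist a b ≠ G.dist a b ∧ (G.induce s).dist a b = n := by
    obtain ⟨a, b, hab⟩ := h
    exact ⟨_, a, b, (hdist_ne a b).1 hab, rfl⟩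
  obtain ⟨a, b, hab, hmin⟩ := Nat.find_spec hex
  refine ⟨a, b, ((hH.preconnected a b).dist_le_induce_dist).lt_of_ne' hab, fun x y hxy ↦ ?_⟩
  by_contra hxy'
  exact Nat.find_min hex (hmin ▸ hxy) ⟨x, y, hxy', rfl⟩

lemma eq_or_eq_of_mem_support_of_mem_support (hH : (G.induce s).Connected) {a b : s}
    (hlt : G.dist a b < (G.induce s).dist a b)
    (hmin : ∀ x y : s, (G.induce s).dist x y < (G.induce s).dist a b →
      (G.induce s).dist x y = G.dist x y)
    {P : G.Walk a b} (hP : P.length = G.dist a b)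
    {Q : (G.induce s).Walk a b} (hQ : Q.length = (G.induce s).dist a b)
    {w : s} (hwP : (w : V) ∈ P.support) (hwQ : w ∈ Q.support) : w = a ∨ w = b := by
  by_contra! ⟨hwa, hwb⟩
  have hQsplit := Q.dist_add_dist_le_length hwQ
  have hPsplit := P.dist_add_dist_le_length hwP
  have hdaw := hH.pos_dist_of_ne hwa.symm
  have hdwb := hH.pos_dist_of_ne hwb
  have := hmin a w (by omega)
  have := hmin w b (by omega)
  have := hH.dist_triangle (u := a) (v := w) (w := b)
  omega

end SimpleGraph

open SimpleGraph in
theorem stmt_4_general {V : Type*} (G : SimpleGraph V)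
    (h2conn : ∀ v : V, (G.induce ({v}ᶜ : Set V)).Connected)
    (hG : IsDistanceCritical G) :
    ∀ v : V, ∃ (u : V) (c : G.Walk u u), c.IsCycle ∧ 5 ≤ c.length ∧ v ∈ c.support := by
  intro v
  obtain ⟨a, b, hlt, hmin⟩ := (h2conn v).exists_minimal_dist_lt_induce_dist (hG v)
  obtain ⟨P, hPpath, hPlen⟩ := ((h2conn v).preconnected a b).of_induce.exists_path_of_dist
  obtain ⟨Q, hQpath, hQlen⟩ := (h2conn v).exists_path_of_dist a b
  have hvP : v ∈ P.support := by
    by_contra hvP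
    have := P.induce_dist_le_length (s := {v}ᶜ) fun x hx ↦ ne_of_mem_of_not_mem hx hvP
    omega
  have hP₂ : 2 ≤ P.length :=
    P.two_le_length_of_mem_support hvP (Ne.symm a.2) (Ne.symm b.2)
  let Q' : G.Walk a b := Q.map (Embedding.induce _).toHom
  refine ⟨a, P.append Q'.reverse, ?_, ?_, ?_⟩
  · refine hPpath.isCycle_append_reverse (hQpath.map (Embedding.induce (G := G) _).injective)
      (fun x hxP hxQ ↦ ?_) (by omega)
    obtain ⟨w, hwQ, rfl⟩ := List.mem_map.1 (Walk.support_map _ Q ▸ hxQ)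
    rcases eq_or_eq_of_mem_support_of_mem_support (h2conn v) hlt hmin hPlen hQlen hxP hwQ
      with rfl | rfl <;> simp
  · rw [Walk.length_append, Walk.length_reverse, show Q'.length = Q.length from Q.length_map _]
    omega
  · exact P.mem_support_append_iff _ |>.2 (Or.inl hvP)

theorem stmt_4 {V : Type*} [Fintype V] (G : SimpleGraph V)
    (hconn : G.Connected) (hcard : 2 < Fintype.card V)
    (h2conn : ∀ v : V, (G.induce ({v}ᶜ : Set V)).Connected)
    (hG : IsDistanceCritical G) :
    ∀ v : V, ∃ (u : V) (c : G.Walk u u), c.IsCycle ∧ 5 ≤ c.length ∧ v ∈ c.support :=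
  stmt_4_general G h2conn hG
end

section
/- If G is a distance critical simple graph, then G has no dominating vertex, i.e., no vertex of G is adjacent to all other vertices. -/
lemma edist_induce_ge {V : Type*} (G : SimpleGraph V) (s : Set V) (x y : s) :
    G.edist (x : V) (y : V) ≤ (G.induce s).edist x y := by
  rcases eq_or_ne ((G.induce s).edist x y) ⊤ with h | h
  · simp [h]
  · obtain ⟨p, hp⟩ := SimpleGraph.exists_walk_of_edist_ne_top h
    calc G.edist (x : V) (y : V) ≤ (p.map (SimpleGraph.Embedding.induce s).toHom).length :=
          SimpleGraph.edist_le _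
      _ = (p.length : ℕ∞) := by rw [SimpleGraph.Walk.length_map]
      _ = (G.induce s).edist x y := hp

theorem stmt_5 {V : Type*} [Fintype V] (G : SimpleGraph V)
    (hG : IsDistanceCritical G) :
    ¬ ∃ v : V, ∀ w : V, w ≠ v → G.Adj v w := by
  rintro ⟨v, hv⟩
  by_cases hcard : ∃ u : V, u ≠ v
  · obtain ⟨u, hu⟩ := hcard
    obtain ⟨x, y, hxy⟩ := hG u
    apply hxy
    have hge := edist_induce_ge G ({u}ᶜ : Set V) x y
    rcases eq_or_ne (x : V) (y : V) with hxyv | hxyv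
    · have : x = y := Subtype.ext hxyv
      subst this
      simp [SimpleGraph.edist_self]
    rcases eq_or_ne (x : V) v with hxv | hxv
    · -- x = v, so x adjacent to y in both graphs
      have hadj : G.Adj (x : V) (y : V) := hxv ▸ hv _ (hxv ▸ hxyv.symm)
      have hadj' : (G.induce ({u}ᶜ : Set V)).Adj x y := hadj
      rw [SimpleGraph.edist_eq_one_iff_adj.mpr hadj,
        SimpleGraph.edist_eq_one_iff_adj.mpr hadj']
    rcases eq_or_ne (y : V) v with hyv | hyv
    · have hadj : G.Adj (x : V) (y : V) := (hyv ▸ hv _ (hyv ▸ hxyv)).symm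
      have hadj' : (G.induce ({u}ᶜ : Set V)).Adj x y := hadj
      rw [SimpleGraph.edist_eq_one_iff_adj.mpr hadj,
        SimpleGraph.edist_eq_one_iff_adj.mpr hadj']
    · by_cases hadj : G.Adj (x : V) (y : V)
      · have hadj' : (G.induce ({u}ᶜ : Set V)).Adj x y := hadj
        rw [SimpleGraph.edist_eq_one_iff_adj.mpr hadj,
          SimpleGraph.edist_eq_one_iff_adj.mpr hadj']
      · -- distance is exactly 2 in both
        have hvmem : v ∈ ({u}ᶜ : Set V) := by simp [hu.symm]
        have ha1 : (G.induce ({u}ᶜ : Set V)).Adj x ⟨v, hvmem⟩ := (hv _ hxv).symm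
        have ha2 : (G.induce ({u}ᶜ : Set V)).Adj ⟨v, hvmem⟩ y := hv _ hyv
        have hle2 : (G.induce ({u}ᶜ : Set V)).edist x y ≤ 2 := by
          have := SimpleGraph.edist_le
            (SimpleGraph.Walk.cons ha1 (SimpleGraph.Walk.cons ha2 SimpleGraph.Walk.nil))
          simpa using this
        have h2le : 2 ≤ G.edist (x : V) (y : V) := by
          have h0 : G.edist (x : V) (y : V) ≠ 0 := by
            simp [SimpleGraph.edist_eq_zero_iff, hxyv]
          have h1 : G.edist (x : V) (y : V) ≠ 1 := by
            simp [SimpleGraph.edist_eq_one_iff_adj, hadj]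
          have hlt : 1 < G.edist (x : V) (y : V) :=
            lt_of_le_of_ne (ENat.one_le_iff_ne_zero.mpr h0) (Ne.symm h1)
          exact (ENat.add_one_le_iff (by simp)).mpr hlt
        exact le_antisymm (hle2.trans h2le) hge
  · push_neg at hcard
    obtain ⟨x, -, -⟩ := hG v
    exact absurd (hcard x) x.2
end

section
/- Let G be a distance critical simple graph, let x and y be nonadjacent vertices of G, and let z be a vertex of G. If z admits no determining pair in the graph G + xy, then either {x, y} is the only determining pair for z in G, or every determining pair for z in G contains x or y. -/
/-- The graph obtained from `G` by adding the edge `xy`. -/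
def addEdge {V : Type*} (G : SimpleGraph V) (x y : V) : SimpleGraph V :=
  G ⊔ SimpleGraph.edge x y

theorem stmt_9 {V : Type*} [Fintype V] (G : SimpleGraph V)
    (hG : IsDistanceCritical G) (x y z : V) (hxy : x ≠ y) (hnadj : ¬ G.Adj x y)
    (hz : ¬ ∃ a b : V, IsDeterminingPair (addEdge G x y) z a b) :
    (IsDeterminingPair G z x y ∧
      ∀ a b : V, IsDeterminingPair G z a b → ({a, b} : Set V) = {x, y}) ∨
    (∀ a b : V, IsDeterminingPair G z a b → a = x ∨ a = y ∨ b = x ∨ b = y) := by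
  right
  intro a b hab
  by_contra h
  push_neg at h
  obtain ⟨hax, hay, hbx, hby⟩ := h
  obtain ⟨hne, hnadj', haz, hbz, huniq⟩ := hab
  refine hz ⟨a, b, hne, ?_, Or.inl haz, Or.inl hbz, ?_⟩
  · rintro (h | h)
    · exact hnadj' h
    · rw [SimpleGraph.edge_adj] at h
      rcases h.1 with ⟨h1, _⟩ | ⟨h1, _⟩
      · exact hax h1
      · exact hay h1
  · rintro w (hw | hw) (hw' | hw')
    · exact huniq w hw hw'
    · rw [SimpleGraph.edge_adj] at hw'
      rcases hw'.1 with ⟨h1, _⟩ | ⟨h1, _⟩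
      · exact absurd h1 hbx
      · exact absurd h1 hby
    · rw [SimpleGraph.edge_adj] at hw
      rcases hw.1 with ⟨h1, _⟩ | ⟨h1, _⟩
      · exact absurd h1 hax
      · exact absurd h1 hay
    · rw [SimpleGraph.edge_adj] at hw
      rcases hw.1 with ⟨h1, _⟩ | ⟨h1, _⟩
      · exact absurd h1 hax
      · exact absurd h1 hay
end

section
/- For every n ≥ 5, the cycle graph C_n on n vertices is distance critical. -/
open Fin.NatCast Fin.CommRing

namespace SimpleGraph

variable {V : Type*} {G : SimpleGraph V}

theorem edist_induce_compl_singleton_ne {v : V} {x y : ({v}ᶜ : Set V)} (hxy : x ≠ y)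
    (hadj : ¬G.Adj x y) (hcn : G.commonNeighbors x y = {v}) :
    (G.induce {v}ᶜ).edist x y ≠ G.edist x y := by
  have hG : G.edist x y = 2 := edist_eq_two_iff.mpr
    ⟨Subtype.coe_injective.ne hxy, hadj, hcn.symm ▸ Set.singleton_nonempty v⟩
  have hcn' : (G.induce {v}ᶜ).commonNeighbors x y = ∅ := by
    refine Set.eq_empty_of_forall_notMem fun w hw ↦ w.2 ?_
    have hw' : (w : V) ∈ G.commonNeighbors x y := hw
    rwa [hcn] at hw'
  rw [hG]
  exact (two_lt_edist_iff.mpr ⟨hxy, hadj, hcn'⟩).ne'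

theorem isDistanceCritical_of_forall_commonNeighbors_eq_singleton
    (h : ∀ v, ∃ x y, x ≠ y ∧ ¬G.Adj x y ∧ G.commonNeighbors x y = {v}) :
    IsDistanceCritical G := by
  intro v
  obtain ⟨x, y, hxy, hadj, hcn⟩ := h v
  have hv : v ∈ G.commonNeighbors x y := hcn ▸ rfl
  rw [mem_commonNeighbors] at hv
  exact ⟨⟨x, hv.1.ne⟩, ⟨y, hv.2.ne⟩,
    edist_induce_compl_singleton_ne (fun h ↦ hxy (congrArg Subtype.val h)) hadj hcn⟩

end SimpleGraph

theorem Fin.sub_one_ne_add_one {n : ℕ} (v : Fin (n + 3)) : v - 1 ≠ v + 1 := by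
  have h2 : (2 : Fin (n + 3)) ≠ 0 := by
    simp [Fin.ext_iff, Nat.mod_eq_of_lt (show 2 < n + 3 by omega)]
  exact fun h ↦ h2 (by linear_combination -h)

namespace SimpleGraph

theorem cycleGraph_not_adj_sub_one_add_one {n : ℕ} (v : Fin (n + 4)) :
    ¬(cycleGraph (n + 4)).Adj (v - 1) (v + 1) := by
  have h3 : (3 : Fin (n + 4)) ≠ 0 := by
    simp [Fin.ext_iff, Nat.mod_eq_of_lt (show 3 < n + 4 by omega)]
  rw [cycleGraph_adj]
  rintro (h | h)
  · exact h3 (by linear_combination -h)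
  · exact one_ne_zero (by linear_combination h : (1 : Fin (n + 4)) = 0)

theorem cycleGraph_commonNeighbors_sub_one_add_one {n : ℕ} (v : Fin (n + 5)) :
    (cycleGraph (n + 5)).commonNeighbors (v - 1) (v + 1) = {v} := by
  have h4 : (4 : Fin (n + 5)) ≠ 0 := by
    simp [Fin.ext_iff, Nat.mod_eq_of_lt (show 4 < n + 5 by omega)]
  have hne : v - 1 - 1 ≠ v + 1 + 1 := fun h ↦ h4 (by linear_combination -h)
  rw [commonNeighbors_eq, cycleGraph_neighborSet, cycleGraph_neighborSet, sub_add_cancel,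
    add_sub_cancel_right]
  ext w
  simp only [Set.mem_inter_iff, Set.mem_insert_iff, Set.mem_singleton_iff]
  constructor
  · rintro ⟨rfl | rfl, h | h⟩ <;> first | rfl | exact h | exact absurd h hne
  · rintro rfl
    simp

end SimpleGraph

theorem stmt_14 (n : ℕ) (hn : 5 ≤ n) :
    IsDistanceCritical (SimpleGraph.cycleGraph n) := by
  obtain ⟨m, rfl⟩ := Nat.exists_eq_add_of_le' hn
  exact SimpleGraph.isDistanceCritical_of_forall_commonNeighbors_eq_singleton fun v ↦
    ⟨v - 1, v + 1, Fin.sub_one_ne_add_one (n := m + 2) v,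
      SimpleGraph.cycleGraph_not_adj_sub_one_add_one (n := m + 1) v,
      SimpleGraph.cycleGraph_commonNeighbors_sub_one_add_one v⟩
end
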